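/- arXiv:2504.07255 — 5 statements merged into one kernel-verified Lean document; each statement's English description precedes it below -/
import Mathlib

section
/- Let A(x) = −f(‖x‖²)x on ℝ^d with f ∈ C¹(ℝ₊, ℝ). If −f(r) − 2r f'(r) ≤ L for all r ≥ 0, then A satisfies the one-sided Lipschitz condition ⟨A(x)−A(y), x−y⟩ ≤ L‖x−y‖² for all x, y ∈ ℝ^d. -/
open Real RealInnerProductSpace

/-!
Along the segment `t ↦ y + t (x - y)`, the function `t ↦ ⟪A (y + t (x - y)), x - y⟫` has derivative
`⟪A_x(z) v, v⟫ = -f(‖z‖²) ‖v‖² - 2 f'(‖z‖²) ⟪z, v⟫²` with `v = x - y`, so by the mean value theorem it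
suffices to bound this quadratic form by `L ‖v‖²`. Since `0 ≤ ⟪z, v⟫² ≤ ‖z‖² ‖v‖²`, the form is at most
`(-f r - 2 r f' r) ‖v‖²` when `f' r ≤ 0` and at most `-f r ‖v‖²` when `f' r > 0` (`r = ‖z‖²`).
The bound `-f r ≤ L` in the second case follows from the hypothesis: `s ↦ s (f(s²) + L)` has
derivative `f(s²) + L + 2 s² f'(s²) ≥ 0` and vanishes at `0`.
-/

section RadialField

variable {E : Type*} [NormedAddCommGroup E] [InnerProductSpace ℝ E] {f f' : ℝ → ℝ} {L : ℝ}

def radialField (f : ℝ → ℝ) (x : E) : E := -f (‖x‖ ^ 2) • x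

theorem hasDerivAt_comp_of_nonneg
    (hf : ∀ r ∈ Set.Ici (0:ℝ), HasDerivWithinAt f (f' r) (Set.Ici 0) r)
    {g : ℝ → ℝ} {g' t : ℝ} (hg : HasDerivAt g g' t) (hg_nonneg : ∀ s, 0 ≤ g s) :
    HasDerivAt (fun s => f (g s)) (f' (g t) * g') t :=
  ((hf (g t) (hg_nonneg t)).scomp_hasDerivAt t hg hg_nonneg).congr_deriv (mul_comm _ _)

theorem neg_le_of_neg_sub_two_mul_mul_deriv_le
    (hf : ∀ r ∈ Set.Ici (0:ℝ), HasDerivWithinAt f (f' r) (Set.Ici 0) r)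
    (hL : ∀ r : ℝ, 0 ≤ r → -f r - 2 * r * f' r ≤ L) {r : ℝ} (hr : 0 ≤ r) :
    -f r ≤ L := by
  rcases hr.eq_or_lt with rfl | hr_pos
  · simpa using hL 0 le_rfl
  have hk : ∀ s : ℝ, HasDerivAt (fun s => s * (f (s ^ 2) + L))
      (f (s ^ 2) + L + 2 * s ^ 2 * f' (s ^ 2)) s := fun s => by
    have hfs := hasDerivAt_comp_of_nonneg hf (hasDerivAt_pow 2 s) (fun s => sq_nonneg s)
    refine ((hasDerivAt_id' s).mul (hfs.add_const L)).congr_deriv ?_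
    norm_num
    ring
  have hk_mono := monotone_of_hasDerivAt_nonneg hk fun s => show (0:ℝ) ≤ _ by
    linarith [hL (s ^ 2) (sq_nonneg s)]
  have h_sqrt := hk_mono (Real.sqrt_nonneg r)
  dsimp only at h_sqrt
  rw [Real.sq_sqrt hr_pos.le, zero_mul] at h_sqrt
  linarith [nonneg_of_mul_nonneg_right h_sqrt (Real.sqrt_pos.2 hr_pos)]

theorem neg_mul_sq_norm_sub_two_mul_inner_sq_le
    (hf : ∀ r ∈ Set.Ici (0:ℝ), HasDerivWithinAt f (f' r) (Set.Ici 0) r)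
    (hL : ∀ r : ℝ, 0 ≤ r → -f r - 2 * r * f' r ≤ L) (z v : E) :
    -f (‖z‖ ^ 2) * ‖v‖ ^ 2 - 2 * f' (‖z‖ ^ 2) * ⟪z, v⟫ ^ 2 ≤ L * ‖v‖ ^ 2 := by
  have h_cs : ⟪z, v⟫ ^ 2 ≤ ‖z‖ ^ 2 * ‖v‖ ^ 2 := by
    rw [← mul_pow]
    exact sq_le_sq' (neg_le_of_abs_le (abs_real_inner_le_norm z v)) (real_inner_le_norm z v)
  have h_neg_f := neg_le_of_neg_sub_two_mul_mul_deriv_le hf hL (sq_nonneg ‖z‖)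
  have h_comb := hL (‖z‖ ^ 2) (sq_nonneg ‖z‖)
  rcases le_or_gt (f' (‖z‖ ^ 2)) 0 with h_deriv | h_deriv
  · nlinarith [sq_nonneg ‖v‖]
  · nlinarith [sq_nonneg ‖v‖, sq_nonneg ⟪z, v⟫]

theorem hasDerivAt_inner_radialField_line
    (hf : ∀ r ∈ Set.Ici (0:ℝ), HasDerivWithinAt f (f' r) (Set.Ici 0) r) (y v : E) (t : ℝ) :
    HasDerivAt (fun t : ℝ => ⟪radialField f (y + t • v), v⟫)
      (-f (‖y + t • v‖ ^ 2) * ‖v‖ ^ 2 - 2 * f' (‖y + t • v‖ ^ 2) * ⟪y + t • v, v⟫ ^ 2) t := by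
  have h_line : HasDerivAt (fun t : ℝ => y + t • v) v t :=
    ((hasDerivAt_id t).smul_const v).const_add y |>.congr_deriv (one_smul ℝ v)
  have h_f := hasDerivAt_comp_of_nonneg hf h_line.norm_sq fun s => sq_nonneg ‖y + s • v‖
  have h_inner := HasDerivAt.inner ℝ h_line (hasDerivAt_const t v)
  simp only [radialField, real_inner_smul_left]
  refine (h_f.neg.mul h_inner).congr_deriv ?_
  rw [inner_zero_right, real_inner_self_eq_norm_sq, Pi.neg_apply]
  ring

theorem inner_radialField_sub_le
    (hf : ∀ r ∈ Set.Ici (0:ℝ), HasDerivWithinAt f (f' r) (Set.Ici 0) r)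
    (hL : ∀ r : ℝ, 0 ≤ r → -f r - 2 * r * f' r ≤ L) (x y : E) :
    ⟪radialField f x - radialField f y, x - y⟫ ≤ L * ‖x - y‖ ^ 2 := by
  obtain ⟨c, -, hc⟩ := exists_hasDerivAt_eq_slope _ _ zero_lt_one
    (fun t _ => (hasDerivAt_inner_radialField_line hf y (x - y) t).continuousAt.continuousWithinAt)
    (fun t _ => hasDerivAt_inner_radialField_line hf y (x - y) t)
  simp only [one_smul, zero_smul, add_zero, add_sub_cancel, sub_zero, div_one] at hc
  rw [inner_sub_left, ← hc]
  exact neg_mul_sq_norm_sub_two_mul_inner_sq_le hf hL _ _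

end RadialField

theorem stmt_8_general (d : ℕ) (f f' : ℝ → ℝ)
    (hf : ∀ r ∈ Set.Ici (0:ℝ), HasDerivWithinAt f (f' r) (Set.Ici 0) r)
    (L : ℝ)
    (hL : ∀ r : ℝ, 0 ≤ r → -f r - 2 * r * f' r ≤ L)
    (A : EuclideanSpace ℝ (Fin d) → EuclideanSpace ℝ (Fin d))
    (hA : ∀ x, A x = -f (‖x‖ ^ 2) • x) :
    ∀ x y : EuclideanSpace ℝ (Fin d), ⟪A x - A y, x - y⟫ ≤ L * ‖x - y‖ ^ 2 := by
  obtain rfl : A = radialField f := funext hA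
  exact inner_radialField_sub_le hf hL

theorem stmt_8 (d : ℕ) (f f' : ℝ → ℝ)
    (hf : ∀ r ∈ Set.Ici (0:ℝ), HasDerivWithinAt f (f' r) (Set.Ici 0) r)
    (hf'c : ContinuousOn f' (Set.Ici 0))
    (L : ℝ)
    (hL : ∀ r : ℝ, 0 ≤ r → -f r - 2 * r * f' r ≤ L)
    (A : EuclideanSpace ℝ (Fin d) → EuclideanSpace ℝ (Fin d))
    (hA : ∀ x, A x = -f (‖x‖ ^ 2) • x) :
    ∀ x y : EuclideanSpace ℝ (Fin d), ⟪A x - A y, x - y⟫ ≤ L * ‖x - y‖ ^ 2 :=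
  stmt_8_general d f f' hf L hL A hA
end

section
/- Let n ∈ ℕ, b > 0, c ∈ ℝ with b ≠ 0, and A(x,y,z) the Lorenz-type drift (−x^{2n+1} − y² − z², −y^{2n+1} + xy − bxz, −z^{2n+1} + bxy + xz). Then for every L > 0, the determinant of [∇A(0,y,0)]_sym − L·Id tends to +∞ as |y| → ∞; consequently A does not satisfy the one-sided Lipschitz condition for any L. -/
/-!
At `(0, y, 0)` the Jacobian of `A` is `[[-d, -2y, 0], [y, -q, 0], [by, 0, -d]]` with
`q = (2n+1) y^(2n)` and `d = (2n+1) 0^(2n)`, so expanding along the first row gives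
`det([∇A]_sym - L) = (q + L) (b² y² / 4 - (d + L)²) + (d + L) y² / 4`,
which is eventually at least `L (b² y² / 4 - (d + L)²)` and hence tends to `+∞`.
The one-sided Lipschitz bound fails already for `u = (L + 2, 1, 0)`, `v = (L + 2, 0, 0)`:
there `⟪A u - A v, u - v⟫ = L + 1` while `‖u - v‖ = 1`.
-/

open Real RealInnerProductSpace Filter

theorem Matrix.div_two_eq_smul {n K : Type*} [Fintype n] [DecidableEq n] [Field K]
    [NeZero (2 : K)] (M : Matrix n n K) : M / 2 = (2⁻¹ : K) • M := by
  have h : (2 : Matrix n n K)⁻¹ = (2⁻¹ : K) • 1 := by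
    refine Matrix.inv_eq_right_inv ?_
    rw [Matrix.mul_smul, mul_one, Algebra.smul_def, ← map_ofNat (algebraMap K (Matrix n n K)) 2,
      ← map_mul, inv_mul_cancel₀ two_ne_zero, map_one]
  rw [div_eq_mul_inv, h, Matrix.mul_smul, mul_one]

noncomputable def Matrix.symmPart {n K : Type*} [Fintype n] [DecidableEq n] [Field K]
    (M : Matrix n n K) : Matrix n n K :=
  (M + M.transpose) / 2

theorem tendsto_sq_cocompact_atTop : Tendsto (fun y : ℝ => y ^ 2) (cocompact ℝ) atTop := by
  simpa [Function.comp_def, Real.norm_eq_abs, sq_abs] using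
    (tendsto_pow_atTop two_ne_zero).comp (tendsto_norm_cocompact_atTop (E := ℝ))

def OneSidedLipschitz {E : Type*} [NormedAddCommGroup E] [InnerProductSpace ℝ E] (L : ℝ)
    (f : E → E) : Prop :=
  ∀ u v, ⟪f u - f v, u - v⟫ ≤ L * ‖u - v‖ ^ 2

noncomputable def lorenzDrift (n : ℕ) (b : ℝ) (v : EuclideanSpace ℝ (Fin 3)) :
    EuclideanSpace ℝ (Fin 3) :=
  (WithLp.equiv 2 (Fin 3 → ℝ)).symm
    ![-(v 0) ^ (2 * n + 1) - (v 1) ^ 2 - (v 2) ^ 2,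
      -(v 1) ^ (2 * n + 1) + (v 0) * (v 1) - b * (v 0) * (v 2),
      -(v 2) ^ (2 * n + 1) + b * (v 0) * (v 1) + (v 0) * (v 2)]

def lorenzJacobian (n : ℕ) (b : ℝ) (v : EuclideanSpace ℝ (Fin 3)) : Matrix (Fin 3) (Fin 3) ℝ :=
  !![-(2 * n + 1) * v 0 ^ (2 * n), -2 * v 1, -2 * v 2;
     v 1 - b * v 2, -(2 * n + 1) * v 1 ^ (2 * n) + v 0, -b * v 0;
     b * v 1 + v 2, b * v 0, -(2 * n + 1) * v 2 ^ (2 * n) + v 0]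

theorem hasFDerivAt_lorenzDrift (n : ℕ) (b : ℝ) (v : EuclideanSpace ℝ (Fin 3)) :
    HasFDerivAt (lorenzDrift n b) (Matrix.toEuclideanCLM (𝕜 := ℝ) (lorenzJacobian n b v)) v := by
  have hx (i : Fin 3) := PiLp.hasFDerivAt_apply (𝕜 := ℝ) 2 v i
  have d0 := (((hx 0).pow (2 * n + 1)).neg.sub ((hx 1).pow 2)).sub ((hx 2).pow 2)
  have d1 := (((hx 1).pow (2 * n + 1)).neg.add ((hx 0).mul (hx 1))).sub
    (((hx 0).const_mul b).mul (hx 2))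
  have d2 := (((hx 2).pow (2 * n + 1)).neg.add (((hx 0).const_mul b).mul (hx 1))).add
    ((hx 0).mul (hx 2))
  rw [← hasFDerivWithinAt_univ, hasFDerivWithinAt_piLp]
  intro i
  rw [hasFDerivWithinAt_univ]
  fin_cases i <;> [apply d0.congr_fderiv; apply d1.congr_fderiv; apply d2.congr_fderiv] <;>
    ext w <;>
    simp only [lorenzJacobian, Matrix.ofLp_toEuclideanCLM, Matrix.mulVec, dotProduct,
      Fin.sum_univ_three, ContinuousLinearMap.comp_apply, add_apply, sub_apply, neg_apply,
      smul_apply, PiLp.proj_apply, smul_eq_mul, Matrix.of_apply, Matrix.cons_val', Matrix.cons_val_fin_one,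
      Matrix.cons_val_zero, Matrix.cons_val_one, Matrix.cons_val, Fin.isValue, Nat.cast_add,
      Nat.cast_mul, Nat.cast_ofNat, Nat.cast_one, nsmul_eq_mul, add_tsub_cancel_right, Fin.zero_eta,
      Fin.mk_one, Fin.reduceFinMk] <;>
    ring

theorem fderiv_lorenzDrift_single_apply (n : ℕ) (b : ℝ) (v : EuclideanSpace ℝ (Fin 3))
    (i j : Fin 3) :
    fderiv ℝ (lorenzDrift n b) v (EuclideanSpace.single j 1) i = lorenzJacobian n b v i j := by
  rw [(hasFDerivAt_lorenzDrift n b v).fderiv]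
  simp [Matrix.ofLp_toEuclideanCLM]

theorem det_symmPart_lorenzJacobian_sub_smul_one (n : ℕ) (b y L : ℝ) :
    ((lorenzJacobian n b (EuclideanSpace.single 1 y)).symmPart - L • 1).det =
      ((2 * n + 1) * y ^ (2 * n) + L) * (b ^ 2 * y ^ 2 / 4 - ((2 * n + 1) * 0 ^ (2 * n) + L) ^ 2)
        + ((2 * n + 1) * 0 ^ (2 * n) + L) * y ^ 2 / 4 := by
  simp only [Matrix.symmPart, Matrix.div_two_eq_smul, lorenzJacobian, Matrix.det_fin_three,
    Matrix.sub_apply, Matrix.add_apply, Matrix.smul_apply, Matrix.transpose_apply, Matrix.of_apply,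
    Matrix.one_apply, Matrix.cons_val', Matrix.cons_val_zero, Matrix.cons_val_one, Matrix.cons_val,
    Matrix.cons_val_fin_one, PiLp.single_apply, smul_eq_mul, Fin.reduceEq, if_true, if_false]
  ring

theorem tendsto_det_symmPart_lorenzJacobian_sub_smul_one (n : ℕ) {b L : ℝ} (hb : b ≠ 0)
    (hL : 0 < L) :
    Tendsto (fun y => ((lorenzJacobian n b (EuclideanSpace.single 1 y)).symmPart - L • 1).det)
      (cocompact ℝ) atTop := by
  simp only [det_symmPart_lorenzJacobian_sub_smul_one]
  set m : ℝ := (2 * n + 1) * 0 ^ (2 * n) + L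
  have hm : 0 ≤ m := add_nonneg (by positivity) hL.le
  have hg : Tendsto (fun y : ℝ => b ^ 2 * y ^ 2 / 4 - m ^ 2) (cocompact ℝ) atTop :=
    tendsto_atTop_add_const_right _ _
      ((tendsto_sq_cocompact_atTop.const_mul_atTop (by positivity)).atTop_div_const (by norm_num))
  refine tendsto_atTop_mono' _ ?_ (hg.const_mul_atTop hL)
  filter_upwards [hg.eventually_ge_atTop 0] with y hy
  have hq : 0 ≤ (2 * n + 1) * y ^ (2 * n) :=
    mul_nonneg (by positivity) ((even_two_mul n).pow_nonneg y)
  nlinarith [mul_nonneg hq hy, mul_nonneg hm (sq_nonneg y)]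

theorem not_oneSidedLipschitz_lorenzDrift (n : ℕ) (b L : ℝ) :
    ¬ OneSidedLipschitz L (lorenzDrift n b) := by
  intro h
  set u : EuclideanSpace ℝ (Fin 3) := WithLp.toLp 2 ![L + 2, 1, 0]
  set v : EuclideanSpace ℝ (Fin 3) := WithLp.toLp 2 ![L + 2, 0, 0]
  have huv : u - v = EuclideanSpace.single 1 1 := by
    ext i; fin_cases i <;> simp [u, v]
  have hdiff : (lorenzDrift n b u - lorenzDrift n b v) 1 = L + 1 := by
    simp only [lorenzDrift, u, v, WithLp.equiv_symm_apply, PiLp.sub_apply, Matrix.cons_val_zero,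
      Matrix.cons_val_one, Matrix.cons_val]
    ring
  have := h u v
  rw [huv, EuclideanSpace.inner_single_right, PiLp.norm_single, hdiff] at this
  norm_num at this

theorem stmt_11_general (n : ℕ) (b : ℝ) (hb : 0 < b)
    (A : EuclideanSpace ℝ (Fin 3) → EuclideanSpace ℝ (Fin 3))
    (hA : ∀ v : EuclideanSpace ℝ (Fin 3),
      A v = (WithLp.equiv 2 (Fin 3 → ℝ)).symm
        ![-(v 0) ^ (2 * n + 1) - (v 1) ^ 2 - (v 2) ^ 2,
          -(v 1) ^ (2 * n + 1) + (v 0) * (v 1) - b * (v 0) * (v 2),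
          -(v 2) ^ (2 * n + 1) + b * (v 0) * (v 1) + (v 0) * (v 2)])
    -- the Jacobian matrix of `A` at the point `(0, y, 0)`
    (J : ℝ → Matrix (Fin 3) (Fin 3) ℝ)
    (hJ : ∀ y : ℝ, ∀ i j : Fin 3,
      J y i j = fderiv ℝ A (EuclideanSpace.single 1 y) (EuclideanSpace.single j 1) i)
    -- its symmetrization
    (S : ℝ → Matrix (Fin 3) (Fin 3) ℝ)
    (hS : ∀ y : ℝ, S y = (J y + Matrix.transpose (J y)) / 2) :
    (∀ L : ℝ, 0 < L →
      Filter.Tendsto (fun y : ℝ => (S y - L • (1 : Matrix (Fin 3) (Fin 3) ℝ)).det)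
        (Filter.cocompact ℝ) Filter.atTop) ∧
    ¬ ∃ L : ℝ, ∀ u v : EuclideanSpace ℝ (Fin 3),
        ⟪A u - A v, u - v⟫ ≤ L * ‖u - v‖ ^ 2 := by
  obtain rfl : A = lorenzDrift n b := funext hA
  have hJS (y : ℝ) : S y = (lorenzJacobian n b (EuclideanSpace.single 1 y)).symmPart := by
    have hJy : J y = lorenzJacobian n b (EuclideanSpace.single 1 y) := by
      ext i j
      rw [hJ, fderiv_lorenzDrift_single_apply]
    rw [hS, hJy, Matrix.symmPart]
  refine ⟨fun L hL => ?_, fun ⟨L, hL⟩ => not_oneSidedLipschitz_lorenzDrift n b L hL⟩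
  simpa only [hJS] using tendsto_det_symmPart_lorenzJacobian_sub_smul_one n hb.ne' hL

theorem stmt_11 (n : ℕ) (b c : ℝ) (hb : 0 < b)
    (A : EuclideanSpace ℝ (Fin 3) → EuclideanSpace ℝ (Fin 3))
    (hA : ∀ v : EuclideanSpace ℝ (Fin 3),
      A v = (WithLp.equiv 2 (Fin 3 → ℝ)).symm
        ![-(v 0) ^ (2 * n + 1) - (v 1) ^ 2 - (v 2) ^ 2,
          -(v 1) ^ (2 * n + 1) + (v 0) * (v 1) - b * (v 0) * (v 2),
          -(v 2) ^ (2 * n + 1) + b * (v 0) * (v 1) + (v 0) * (v 2)])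
    -- the Jacobian matrix of `A` at the point `(0, y, 0)`
    (J : ℝ → Matrix (Fin 3) (Fin 3) ℝ)
    (hJ : ∀ y : ℝ, ∀ i j : Fin 3,
      J y i j = fderiv ℝ A (EuclideanSpace.single 1 y) (EuclideanSpace.single j 1) i)
    -- its symmetrization
    (S : ℝ → Matrix (Fin 3) (Fin 3) ℝ)
    (hS : ∀ y : ℝ, S y = (J y + Matrix.transpose (J y)) / 2) :
    (∀ L : ℝ, 0 < L →
      Filter.Tendsto (fun y : ℝ => (S y - L • (1 : Matrix (Fin 3) (Fin 3) ℝ)).det)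
        (Filter.cocompact ℝ) Filter.atTop) ∧
    ¬ ∃ L : ℝ, ∀ u v : EuclideanSpace ℝ (Fin 3),
        ⟪A u - A v, u - v⟫ ≤ L * ‖u - v‖ ^ 2 :=
  stmt_11_general n b hb A hA J hJ S hS
end

section
/- The function m(x) = 1/(π(x⁴ − x² + 1)) is a probability density on ℝ, i.e. m ≥ 0 and ∫_ℝ m(x) dx = 1. -/
/-!
Over `ℝ`, `x⁴ - x² + 1 = (x² + √3 x + 1)(x² - √3 x + 1)` with both factors positive, and partial
fractions give the explicit primitive `quarticPrimitive` of `m`, a combination of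
`log (x² + √3 x + 1) - log (x² - √3 x + 1)` and `arctan (2x + √3) + arctan (2x - √3)`.
The logarithmic part tends to `0` and the arctangent part to `±π` at `±∞`, so the primitive rises
from `-1/2` to `1/2`. Integrability comes from `m x ≤ 3 / (π (1 + x²))`.
-/

open Real MeasureTheory Filter Topology

lemma sq_add_mul_add_one_pos {a : ℝ} (ha : a ^ 2 < 4) (x : ℝ) : 0 < x ^ 2 + a * x + 1 := by
  nlinarith [sq_nonneg (2 * x + a)]

lemma sq_add_sqrt_three_mul_add_one_pos (x : ℝ) : 0 < x ^ 2 + √3 * x + 1 :=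
  sq_add_mul_add_one_pos (by norm_num) x

lemma sq_sub_sqrt_three_mul_add_one_pos (x : ℝ) : 0 < x ^ 2 - √3 * x + 1 := by
  simpa [sub_eq_add_neg] using sq_add_mul_add_one_pos (a := -√3) (by norm_num) x

lemma quartic_eq_mul (x : ℝ) :
    x ^ 4 - x ^ 2 + 1 = (x ^ 2 + √3 * x + 1) * (x ^ 2 - √3 * x + 1) := by
  ring_nf; rw [sq_sqrt (by norm_num : (0:ℝ) ≤ 3)]; ring

lemma quartic_pos (x : ℝ) : 0 < x ^ 4 - x ^ 2 + 1 := by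
  rw [quartic_eq_mul]
  exact mul_pos (sq_add_sqrt_three_mul_add_one_pos x) (sq_sub_sqrt_three_mul_add_one_pos x)

lemma tendsto_div_sq_add_mul_add_one_atTop (a b : ℝ) :
    Tendsto (fun x : ℝ => (x ^ 2 + a * x + 1) / (x ^ 2 + b * x + 1)) atTop (𝓝 1) := by
  have h (c : ℝ) : Tendsto (fun x : ℝ => 1 + c * x⁻¹ + x⁻¹ ^ 2) atTop (𝓝 1) := by
    simpa using ((tendsto_inv_atTop_zero.const_mul c).const_add 1).add
      (tendsto_inv_atTop_zero.pow 2)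
  have hab := (h a).div (h b) one_ne_zero
  rw [div_one] at hab
  refine hab.congr' ?_
  filter_upwards [eventually_ne_atTop 0] with x hx
  have hc (c : ℝ) : 1 + c * x⁻¹ + x⁻¹ ^ 2 = (x ^ 2 + c * x + 1) / x ^ 2 := by field_simp
  simp only [Pi.div_apply, hc, div_div_div_cancel_right₀ (pow_ne_zero 2 hx)]

lemma hasDerivAt_log_sub_log (x : ℝ) :
    HasDerivAt (fun x => log (x ^ 2 + √3 * x + 1) - log (x ^ 2 - √3 * x + 1))
      (2 * √3 * (1 - x ^ 2) / (x ^ 4 - x ^ 2 + 1)) x := by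
  have hu := sq_add_sqrt_three_mul_add_one_pos x
  have hv := sq_sub_sqrt_three_mul_add_one_pos x
  have hu' : HasDerivAt (fun x => x ^ 2 + √3 * x + 1) (2 * x + √3) x := by
    simpa using ((hasDerivAt_pow 2 x).add ((hasDerivAt_id x).const_mul √3)).add_const 1
  have hv' : HasDerivAt (fun x => x ^ 2 - √3 * x + 1) (2 * x - √3) x := by
    simpa using ((hasDerivAt_pow 2 x).sub ((hasDerivAt_id x).const_mul √3)).add_const 1
  refine ((hu'.log hu.ne').sub (hv'.log hv.ne')).congr_deriv ?_
  rw [div_sub_div _ _ hu.ne' hv.ne', quartic_eq_mul]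
  ring

lemma hasDerivAt_arctan_add_arctan (x : ℝ) :
    HasDerivAt (fun x => arctan (2 * x + √3) + arctan (2 * x - √3))
      ((1 + x ^ 2) / (x ^ 4 - x ^ 2 + 1)) x := by
  have hu := sq_add_sqrt_three_mul_add_one_pos x
  have hv := sq_sub_sqrt_three_mul_add_one_pos x
  have h3 : √3 ^ 2 = 3 := sq_sqrt (by norm_num)
  have hu' : HasDerivAt (fun x => 2 * x + √3) 2 x := by
    simpa using ((hasDerivAt_id x).const_mul 2).add_const √3
  have hv' : HasDerivAt (fun x => 2 * x - √3) 2 x := by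
    simpa using ((hasDerivAt_id x).const_mul 2).sub_const √3
  refine (hu'.arctan.add hv'.arctan).congr_deriv ?_
  have hsu : 1 + (2 * x + √3) ^ 2 = 4 * (x ^ 2 + √3 * x + 1) := by linear_combination h3
  have hsv : 1 + (2 * x - √3) ^ 2 = 4 * (x ^ 2 - √3 * x + 1) := by linear_combination h3
  have hsum : 1 + x ^ 2 = ((x ^ 2 + √3 * x + 1) + (x ^ 2 - √3 * x + 1)) / 2 := by ring
  rw [hsu, hsv, quartic_eq_mul, hsum]
  generalize x ^ 2 + √3 * x + 1 = u at hu ⊢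
  generalize x ^ 2 - √3 * x + 1 = v at hv ⊢
  field_simp
  ring

noncomputable def quarticPrimitive (x : ℝ) : ℝ :=
  (log (x ^ 2 + √3 * x + 1) - log (x ^ 2 - √3 * x + 1)) / (4 * √3 * π)
    + (arctan (2 * x + √3) + arctan (2 * x - √3)) / (2 * π)

lemma hasDerivAt_quarticPrimitive (x : ℝ) :
    HasDerivAt quarticPrimitive (1 / (π * (x ^ 4 - x ^ 2 + 1))) x := by
  refine (((hasDerivAt_log_sub_log x).div_const (4 * √3 * π)).add
    ((hasDerivAt_arctan_add_arctan x).div_const (2 * π))).congr_deriv ?_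
  have hq := (quartic_pos x).ne'
  have h3 : √3 ≠ 0 := by positivity
  field_simp
  ring

lemma quarticPrimitive_neg (x : ℝ) : quarticPrimitive (-x) = -quarticPrimitive x := by
  have hu : (-x) ^ 2 + √3 * -x + 1 = x ^ 2 - √3 * x + 1 := by ring
  have hv : (-x) ^ 2 - √3 * -x + 1 = x ^ 2 + √3 * x + 1 := by ring
  have hu' : 2 * -x + √3 = -(2 * x - √3) := by ring
  have hv' : 2 * -x - √3 = -(2 * x + √3) := by ring
  simp only [quarticPrimitive, hu, hv, hu', hv', arctan_neg]
  ring

lemma tendsto_log_sub_log_atTop :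
    Tendsto (fun x => log (x ^ 2 + √3 * x + 1) - log (x ^ 2 - √3 * x + 1)) atTop (𝓝 0) := by
  have := (tendsto_div_sq_add_mul_add_one_atTop √3 (-√3)).log one_ne_zero
  rw [log_one] at this
  refine this.congr fun x => ?_
  rw [neg_mul, ← sub_eq_add_neg, log_div (sq_add_sqrt_three_mul_add_one_pos x).ne'
    (sq_sub_sqrt_three_mul_add_one_pos x).ne']

lemma tendsto_quarticPrimitive_atTop : Tendsto quarticPrimitive atTop (𝓝 (1 / 2)) := by
  have h2x : Tendsto (fun x : ℝ => 2 * x) atTop atTop := tendsto_id.const_mul_atTop two_pos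
  have harctan {f : ℝ → ℝ} (hf : Tendsto f atTop atTop) :
      Tendsto (fun x => arctan (f x)) atTop (𝓝 (π / 2)) :=
    (tendsto_nhds_of_tendsto_nhdsWithin tendsto_arctan_atTop).comp hf
  have := (tendsto_log_sub_log_atTop.div_const (4 * √3 * π)).add
    (((harctan (tendsto_atTop_add_const_right _ √3 h2x)).add
      (harctan (tendsto_atTop_add_const_right _ (-√3) h2x))).div_const (2 * π))
  have hlim : (0 : ℝ) / (4 * √3 * π) + (π / 2 + π / 2) / (2 * π) = 1 / 2 := by
    field_simp; ring
  rw [hlim] at this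
  exact this.congr fun x => by simp only [quarticPrimitive, sub_eq_add_neg]

lemma tendsto_quarticPrimitive_atBot : Tendsto quarticPrimitive atBot (𝓝 (-(1 / 2))) := by
  refine ((tendsto_quarticPrimitive_atTop.comp tendsto_neg_atBot_atTop).neg).congr fun x => ?_
  simp [quarticPrimitive_neg]

lemma one_div_pi_mul_quartic_le (x : ℝ) :
    1 / (π * (x ^ 4 - x ^ 2 + 1)) ≤ 3 / π * (1 + x ^ 2)⁻¹ := by
  have hq := quartic_pos x
  have h : 1 + x ^ 2 ≤ 3 * (x ^ 4 - x ^ 2 + 1) := by nlinarith [sq_nonneg (3 * x ^ 2 - 2)]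
  rw [← div_eq_mul_inv, div_div, div_le_div_iff₀ (by positivity) (by positivity)]
  nlinarith [mul_le_mul_of_nonneg_left h pi_pos.le]

lemma integrable_one_div_pi_mul_quartic :
    Integrable fun x : ℝ => 1 / (π * (x ^ 4 - x ^ 2 + 1)) := by
  refine (integrable_inv_one_add_sq.const_mul (3 / π)).mono' ?_ (ae_of_all _ fun x => ?_)
  · exact (continuous_const.div (by fun_prop) fun x =>
      (mul_pos pi_pos (quartic_pos x)).ne').aestronglyMeasurable
  · have := quartic_pos x
    rw [norm_of_nonneg (by positivity)]
    exact one_div_pi_mul_quartic_le x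

theorem stmt_12 (m : ℝ → ℝ) (hm : ∀ x, m x = 1 / (Real.pi * (x ^ 4 - x ^ 2 + 1))) :
    (∀ x, 0 ≤ m x) ∧ ∫ x : ℝ, m x = 1 := by
  obtain rfl : m = fun x => 1 / (π * (x ^ 4 - x ^ 2 + 1)) := funext hm
  refine ⟨fun x => by have := quartic_pos x; positivity, ?_⟩
  rw [integral_of_hasDerivAt_of_tendsto hasDerivAt_quarticPrimitive
    integrable_one_div_pi_mul_quartic tendsto_quarticPrimitive_atBot
    tendsto_quarticPrimitive_atTop]
  norm_num
end

section
/- If X has density m(x) = 1/(π(x⁴ − x² + 1)) on ℝ, then E|X|^{1/2} = ∫_ℝ |x|^{1/2} m(x) dx = √(2/3), and E|X|^{3/2} = √(2/3), and E|X|^{5/2} = 2√(2/3). -/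
open Real MeasureTheory Set

/-!
Since `x⁴ - x² + 1 = (x⁶ + 1) / (x² + 1)`, the moment `E|X|^p` equals
`(2/π) ∫₀^∞ (x^p + x^(p+2)) / (1 + x⁶) dx`. The substitution `y = x⁶` followed by
`y = t / (1 - t)` turns `∫₀^∞ x^(a-1) / (1 + x^n) dx` into a Beta integral, which Euler's
reflection formula evaluates to `(π/n) / sin (π a / n)`. For `p = 1/2, 3/2, 5/2` the sines
are taken at multiples of `π/12`, whose reciprocals are `√6 ± √2` and `√2`.
-/

theorem integral_Ioo_rpow_mul_one_sub_rpow {a b : ℝ} (ha : 0 < a) (hb : 0 < b) :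
    ∫ t in Ioo (0 : ℝ) 1, t ^ (a - 1) * (1 - t) ^ (b - 1) =
      Gamma a * Gamma b / Gamma (a + b) := by
  have h := Complex.betaIntegral_eq_Gamma_mul_div a b (by simpa) (by simpa)
  rw [Complex.betaIntegral, intervalIntegral.integral_of_le zero_le_one,
    integral_Ioc_eq_integral_Ioo] at h
  apply Complex.ofReal_injective
  push_cast [← Complex.ofReal_add, Complex.Gamma_ofReal] at h ⊢
  rw [← h, ← integral_complex_ofReal]
  refine setIntegral_congr_fun measurableSet_Ioo fun t ht => ?_
  push_cast [Complex.ofReal_cpow ht.1.le, Complex.ofReal_cpow (sub_nonneg.2 ht.2.le)]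
  rfl

theorem integral_Ioi_rpow_div_one_add_rpow (a b : ℝ) :
    ∫ y in Ioi (0 : ℝ), y ^ (a - 1) / (1 + y) ^ (a + b) =
      ∫ t in Ioo (0 : ℝ) 1, t ^ (a - 1) * (1 - t) ^ (b - 1) := by
  have himage : (fun t : ℝ => t / (1 - t)) '' Ioo 0 1 = Ioi 0 := by
    ext y
    simp only [mem_image, mem_Ioo, mem_Ioi]
    constructor
    · rintro ⟨t, ⟨ht0, ht1⟩, rfl⟩
      exact div_pos ht0 (by linarith)
    · intro hy
      refine ⟨y / (1 + y), ⟨by positivity, (div_lt_one (by linarith)).2 (by linarith)⟩, ?_⟩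
      field_simp
      ring
  have hderiv : ∀ t ∈ Ioo (0 : ℝ) 1,
      HasDerivWithinAt (fun t : ℝ => t / (1 - t)) (((1 - t) ^ 2)⁻¹) (Ioo 0 1) t := by
    intro t ht
    have h1t : 1 - t ≠ 0 := (sub_pos.2 ht.2).ne'
    refine (((hasDerivAt_id' t).div ((hasDerivAt_id' t).const_sub 1) h1t).congr_deriv
      ?_).hasDerivWithinAt
    field_simp
    ring
  have hinj : InjOn (fun t : ℝ => t / (1 - t)) (Ioo 0 1) := by
    intro u hu v hv huv
    have := (sub_pos.2 hu.2).ne'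
    have := (sub_pos.2 hv.2).ne'
    field_simp at huv
    linarith
  rw [← himage, integral_image_eq_integral_abs_deriv_smul measurableSet_Ioo hderiv hinj]
  refine setIntegral_congr_fun measurableSet_Ioo fun t ⟨ht0, ht1⟩ => ?_
  have hs : 0 < 1 - t := by linarith
  have hone_add : 1 + t / (1 - t) = (1 - t)⁻¹ := by field_simp; ring
  rw [smul_eq_mul, abs_of_pos (by positivity), hone_add, div_rpow ht0.le hs.le, inv_rpow hs.le,
    div_eq_mul_inv, div_eq_mul_inv, inv_inv, ← rpow_natCast, ← rpow_neg hs.le]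
  calc (1 - t) ^ (-((2 : ℕ) : ℝ)) * (t ^ (a - 1) * ((1 - t) ^ (a - 1))⁻¹ * (1 - t) ^ (a + b))
      = t ^ (a - 1) *
          ((1 - t) ^ (-((2 : ℕ) : ℝ)) * (1 - t) ^ (-(a - 1)) * (1 - t) ^ (a + b)) := by
        rw [rpow_neg hs.le (a - 1)]; ring
    _ = t ^ (a - 1) * (1 - t) ^ (b - 1) := by
        rw [← rpow_add hs, ← rpow_add hs]; congr 2; push_cast; ring

theorem integral_Ioi_rpow_div_one_add {s : ℝ} (h0 : 0 < s) (h1 : s < 1) :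
    ∫ y in Ioi (0 : ℝ), y ^ (s - 1) / (1 + y) = π / sin (π * s) := by
  have h := integral_Ioi_rpow_div_one_add_rpow s (1 - s)
  simp only [add_sub_cancel, rpow_one] at h
  rw [h, integral_Ioo_rpow_mul_one_sub_rpow h0 (by linarith), add_sub_cancel, Gamma_one, div_one,
    Gamma_mul_Gamma_one_sub]

theorem integral_Ioi_rpow_div_one_add_pow {n : ℕ} (hn : 0 < n) {a : ℝ} (h0 : 0 < a)
    (h1 : a < n) :
    ∫ x in Ioi (0 : ℝ), x ^ (a - 1) / (1 + x ^ n) = π / n / sin (π * a / n) := by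
  have hn' : (0 : ℝ) < n := Nat.cast_pos.2 hn
  have h := integral_comp_rpow_Ioi_of_pos (g := fun y => y ^ (a / n - 1) / (1 + y)) hn'
  have hcomp : ∀ x ∈ Ioi (0 : ℝ), ((n : ℝ) * x ^ ((n : ℝ) - 1)) •
      ((x ^ (n : ℝ)) ^ (a / n - 1) / (1 + x ^ (n : ℝ))) = n * (x ^ (a - 1) / (1 + x ^ n)) := by
    intro x hx
    rw [smul_eq_mul, ← rpow_mul (le_of_lt hx), rpow_natCast, mul_assoc, mul_div_assoc',
      ← rpow_add hx]
    congr 3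
    field_simp
    ring
  rw [setIntegral_congr_fun measurableSet_Ioi hcomp, integral_const_mul,
    integral_Ioi_rpow_div_one_add (by positivity) ((div_lt_one hn').2 h1)] at h
  rw [div_right_comm, eq_div_iff hn'.ne', mul_comm, h, mul_div_assoc]

theorem integrableOn_rpow_div_one_add_pow {n : ℕ} (hn : 0 < n) {a : ℝ} (h0 : 0 < a)
    (h1 : a < n) :
    IntegrableOn (fun x : ℝ => x ^ (a - 1) / (1 + x ^ n)) (Ioi 0) := by
  -- the integral is nonzero, while a non-integrable function has integral `0`
  refine Integrable.of_integral_ne_zero ?_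
  have hn' : (0 : ℝ) < n := Nat.cast_pos.2 hn
  have hsin : 0 < sin (π * a / n) :=
    sin_pos_of_pos_of_lt_pi (by positivity) ((div_lt_iff₀ hn').2 (by nlinarith [pi_pos]))
  rw [integral_Ioi_rpow_div_one_add_pow hn h0 h1]
  positivity

theorem integral_abs_rpow_div_pow_four_sub_sq_add_one {p : ℝ} (h0 : 0 < p) (h1 : p < 3) :
    ∫ x : ℝ, |x| ^ p / (x ^ 4 - x ^ 2 + 1) =
      π / 3 * ((sin (π * (p + 1) / 6))⁻¹ + (sin (π * (p + 3) / 6))⁻¹) := by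
  have hsplit : ∀ y ∈ Ioi (0 : ℝ), y ^ p / (y ^ 4 - y ^ 2 + 1) =
      y ^ (p + 1 - 1) / (1 + y ^ 6) + y ^ (p + 3 - 1) / (1 + y ^ 6) := by
    intro y hy
    have hquartic : 0 < y ^ 4 - y ^ 2 + 1 := by nlinarith [sq_nonneg (y ^ 2 - 1)]
    rw [add_sub_cancel_right, show p + 3 - 1 = p + (2 : ℕ) by push_cast; ring, rpow_add hy,
      rpow_natCast, ← add_div, eq_div_iff (by positivity), div_mul_eq_mul_div,
      div_eq_iff hquartic.ne']
    ring
  have hint : ∀ q : ℝ, 0 < q → q < 6 →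
      IntegrableOn (fun y : ℝ => y ^ (q - 1) / (1 + y ^ 6)) (Ioi 0) := fun q hq0 hq1 =>
    integrableOn_rpow_div_one_add_pow (by norm_num) hq0 (by exact_mod_cast hq1)
  calc ∫ x : ℝ, |x| ^ p / (x ^ 4 - x ^ 2 + 1)
      = ∫ x : ℝ, |x| ^ p / (|x| ^ 4 - |x| ^ 2 + 1) := by
        simp only [Even.pow_abs (by decide : Even 4), sq_abs]
    _ = 2 * ∫ y in Ioi 0, y ^ p / (y ^ 4 - y ^ 2 + 1) :=
        integral_comp_abs (f := fun y => y ^ p / (y ^ 4 - y ^ 2 + 1))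
    _ = 2 * ((∫ y in Ioi 0, y ^ (p + 1 - 1) / (1 + y ^ 6)) +
          ∫ y in Ioi 0, y ^ (p + 3 - 1) / (1 + y ^ 6)) := by
        rw [setIntegral_congr_fun measurableSet_Ioi hsplit,
          integral_add (hint _ (by linarith) (by linarith)) (hint _ (by linarith) (by linarith))]
    _ = _ := by
        rw [integral_Ioi_rpow_div_one_add_pow (n := 6) (by norm_num) (by linarith)
            (by norm_num; linarith),
          integral_Ioi_rpow_div_one_add_pow (n := 6) (by norm_num) (by linarith)
            (by norm_num; linarith)]
        push_cast
        ring

theorem sqrt_six_eq_sqrt_two_mul_sqrt_three : √6 = √2 * √3 := by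
  rw [← sqrt_mul zero_le_two]
  norm_num

theorem inv_sin_pi_div_twelve : (sin (π / 12))⁻¹ = √6 + √2 := by
  refine inv_eq_of_mul_eq_one_left ?_
  rw [show π / 12 = π / 3 - π / 4 by ring, sin_sub, sin_pi_div_three, cos_pi_div_three,
    sin_pi_div_four, cos_pi_div_four, sqrt_six_eq_sqrt_two_mul_sqrt_three]
  have h2 : √2 ^ 2 = 2 := sq_sqrt zero_le_two
  have h3 : √3 ^ 2 = 3 := sq_sqrt zero_le_three
  linear_combination (√3 ^ 2 / 4 - 1 / 4) * h2 + h3 / 2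

theorem inv_cos_pi_div_twelve : (cos (π / 12))⁻¹ = √6 - √2 := by
  refine inv_eq_of_mul_eq_one_left ?_
  rw [show π / 12 = π / 3 - π / 4 by ring, cos_sub, sin_pi_div_three, cos_pi_div_three,
    sin_pi_div_four, cos_pi_div_four, sqrt_six_eq_sqrt_two_mul_sqrt_three]
  have h2 : √2 ^ 2 = 2 := sq_sqrt zero_le_two
  have h3 : √3 ^ 2 = 3 := sq_sqrt zero_le_three
  linear_combination (√3 ^ 2 / 4 - 1 / 4) * h2 + h3 / 2

theorem inv_sin_pi_div_four : (sin (π / 4))⁻¹ = √2 := by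
  refine inv_eq_of_mul_eq_one_left ?_
  rw [sin_pi_div_four, ← mul_div_assoc, mul_self_sqrt zero_le_two, div_self two_ne_zero]

theorem stmt_15 (m : ℝ → ℝ) (hm : ∀ x, m x = 1 / (Real.pi * (x ^ 4 - x ^ 2 + 1))) :
    (∫ x : ℝ, |x| ^ ((1:ℝ)/2) * m x = Real.sqrt (2/3)) ∧
    (∫ x : ℝ, |x| ^ ((3:ℝ)/2) * m x = Real.sqrt (2/3)) ∧
    (∫ x : ℝ, |x| ^ ((5:ℝ)/2) * m x = 2 * Real.sqrt (2/3)) := by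
  have hmoment : ∀ p : ℝ, 0 < p → p < 3 → ∫ x, |x| ^ p * m x =
      ((sin (π * (p + 1) / 6))⁻¹ + (sin (π * (p + 3) / 6))⁻¹) / 3 := by
    intro p h0 h1
    simp only [hm, mul_one_div]
    simp only [div_mul_eq_div_div_swap]
    rw [integral_div, integral_abs_rpow_div_pow_four_sub_sq_add_one h0 h1]
    field_simp
  have hsqrt : √(2 / 3) = √6 / 3 := by
    rw [show (2 / 3 : ℝ) = 6 / 3 ^ 2 by norm_num, sqrt_div' _ (by positivity),
      sqrt_sq zero_le_three]
  refine ⟨?_, ?_, ?_⟩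
  · rw [hmoment _ (by norm_num) (by norm_num),
      show π * (1 / 2 + 1) / 6 = π / 4 by ring,
      show π * (1 / 2 + 3) / 6 = π / 12 + π / 2 by ring, sin_add_pi_div_two,
      inv_sin_pi_div_four, inv_cos_pi_div_twelve, hsqrt]
    ring
  · rw [hmoment _ (by norm_num) (by norm_num),
      show π * (3 / 2 + 1) / 6 = π / 2 - π / 12 by ring,
      show π * (3 / 2 + 3) / 6 = π - π / 4 by ring, sin_pi_div_two_sub, sin_pi_sub,
      inv_sin_pi_div_four, inv_cos_pi_div_twelve, hsqrt]
    ring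
  · rw [hmoment _ (by norm_num) (by norm_num),
      show π * (5 / 2 + 1) / 6 = π / 12 + π / 2 by ring,
      show π * (5 / 2 + 3) / 6 = π - π / 12 by ring, sin_add_pi_div_two, sin_pi_sub,
      inv_sin_pi_div_twelve, inv_cos_pi_div_twelve, hsqrt]
    ring
end

section
/- Let p > q > 0, κ > 1, χ > 0, ε ∈ (0, p+κ−1−p_X), and p ≤ p_X < p+κ−1. Define δ̄(q) = min((p−q)/χ, q/2, 1) and γ(q,ε) = (p+κ−1−p_X−ε)/(p+κ−1−q−ε). Then sup over q ∈ (0,p) and ε of δ̄(q)·γ(q,ε) equals (p/(2+χ))·(p+κ−1−p_X)/(p+κ−1−2p/(2+χ)) when p ≤ χ+2, and equals (p+κ−1−p_X)/(κ+χ−1) when p > χ+2, attained at q* = 2p/(2+χ) and q* = p−χ respectively. -/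
/-!
Write `K = p + κ - 1`. Since `p_X ≥ p > q`, the ratio `γ(q, ε)` decreases in `ε`, so the supremum over
`ε` is the limit `(K - p_X) / (K - q)` at `ε = 0`, which is not attained. It remains to maximise
`δ̄(q) / (K - q)`. Split `δ̄ = min ((p - q) / χ) (min (q / 2) 1)` into a decreasing and an increasing
part, and let `q*` be the point where they meet. For `q ≤ q*` the numerator is at most `δ̄(q*)` and
the denominator at least `K - q*`; for `q ≥ q*` the bound `((p - q) / (K - q)) / χ` decreases in `q`
because `p < K`.
-/

open Set Filter Topology

lemma sub_div_sub_le_div {a b t : ℝ} (ht : 0 ≤ t) (hab : a ≤ b) (htb : t < b) :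
    (a - t) / (b - t) ≤ a / b := by
  rw [div_le_div_iff₀ (sub_pos.2 htb) (ht.trans_lt htb)]
  nlinarith [mul_le_mul_of_nonneg_left hab ht]

/-- The point where the decreasing part `(p - q) / χ` of `δ̄` meets its increasing part
`min (q / 2) 1`. -/
noncomputable def crossingPoint (p χ : ℝ) : ℝ :=
  if p ≤ χ + 2 then 2 * p / (2 + χ) else p - χ

section crossingPoint

variable {p χ : ℝ}

lemma crossingPoint_mem_Ioo (hp : 0 < p) (hχ : 0 < χ) : crossingPoint p χ ∈ Ioo 0 p := by
  unfold crossingPoint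
  split_ifs
  · exact ⟨by positivity, by rw [div_lt_iff₀ (by positivity)]; nlinarith⟩
  · exact ⟨by linarith, by linarith⟩

lemma sub_crossingPoint_div (hχ : 0 < χ) :
    (p - crossingPoint p χ) / χ = if p ≤ χ + 2 then p / (2 + χ) else 1 := by
  unfold crossingPoint
  split_ifs
  · field_simp
    ring
  · simp [hχ.ne']

lemma min_crossingPoint_half_one (hχ : 0 < χ) :
    min (crossingPoint p χ / 2) 1 = if p ≤ χ + 2 then p / (2 + χ) else 1 := by
  unfold crossingPoint
  split_ifs with h
  · rw [show 2 * p / (2 + χ) / 2 = p / (2 + χ) by ring]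
    exact min_eq_left ((div_le_one (by positivity)).2 (by linarith))
  · exact min_eq_right (by linarith)

end crossingPoint

lemma min_div_sub_le_of_crossing {p χ K q q₀ : ℝ} (hχ : 0 < χ) (hpK : p < K) (hqK : q < K)
    (hq₀p : q₀ ≤ p) (hcross : (p - q₀) / χ = min (q₀ / 2) 1) :
    min (min ((p - q) / χ) (q / 2)) 1 / (K - q) ≤ (p - q₀) / χ / (K - q₀) := by
  rcases le_total q q₀ with hq | hq
  · refine div_le_div₀ (div_nonneg (sub_nonneg.2 hq₀p) hχ.le) ?_ (by linarith) (by linarith)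
    rw [hcross, min_assoc]
    exact (min_le_right _ _).trans (min_le_min (by linarith) le_rfl)
  · have hdecr : (p - q) / (K - q) ≤ (p - q₀) / (K - q₀) := by
      have := sub_div_sub_le_div (sub_nonneg.2 hq) (by linarith : p - q₀ ≤ K - q₀)
        (by linarith : q - q₀ < K - q₀)
      rwa [sub_sub_sub_cancel_right, sub_sub_sub_cancel_right] at this
    calc min (min ((p - q) / χ) (q / 2)) 1 / (K - q) ≤ (p - q) / χ / (K - q) :=
          div_le_div_of_nonneg_right ((min_le_left _ _).trans (min_le_left _ _)) (by linarith)
      _ = (p - q) / (K - q) / χ := div_right_comm _ _ _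
      _ ≤ (p - q₀) / (K - q₀) / χ := div_le_div_of_nonneg_right hdecr hχ.le
      _ = (p - q₀) / χ / (K - q₀) := div_right_comm _ _ _

lemma sSup_mul_sub_div_sub_eq {δ : ℝ → ℝ} {p K E q₀ : ℝ} (hδ : ∀ q ∈ Ioo 0 p, 0 ≤ δ q)
    (hq₀ : q₀ ∈ Ioo 0 p) (hmax : ∀ q ∈ Ioo 0 p, δ q / (K - q) ≤ δ q₀ / (K - q₀))
    (hE : 0 < E) (hEK : E ≤ K - p) :
    sSup {v | ∃ q ∈ Ioo 0 p, ∃ ε ∈ Ioo 0 E, v = δ q * ((E - ε) / (K - q - ε))} =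
      δ q₀ * (E / (K - q₀)) := by
  set S := {v | ∃ q ∈ Ioo 0 p, ∃ ε ∈ Ioo 0 E, v = δ q * ((E - ε) / (K - q - ε))}
  have hub : δ q₀ * (E / (K - q₀)) ∈ upperBounds S := by
    rintro _ ⟨q, hq, ε, hε, rfl⟩
    calc δ q * ((E - ε) / (K - q - ε)) ≤ δ q * (E / (K - q)) :=
          mul_le_mul_of_nonneg_left
            (sub_div_sub_le_div hε.1.le (by linarith [hq.2]) (by linarith [hq.2, hε.2])) (hδ q hq)
      _ = E * (δ q / (K - q)) := mul_div_left_comm _ _ _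
      _ ≤ E * (δ q₀ / (K - q₀)) := mul_le_mul_of_nonneg_left (hmax q hq) hE.le
      _ = δ q₀ * (E / (K - q₀)) := mul_div_left_comm _ _ _
  have hlim : Tendsto (fun ε => δ q₀ * ((E - ε) / (K - q₀ - ε))) (𝓝[>] 0)
      (𝓝 (δ q₀ * (E / (K - q₀)))) := by
    have hK : K - q₀ - 0 ≠ 0 := by linarith [hq₀.2]
    have hcont : ContinuousAt (fun ε => δ q₀ * ((E - ε) / (K - q₀ - ε))) 0 := by
      fun_prop (disch := exact hK)
    simpa using hcont.tendsto.mono_left nhdsWithin_le_nhds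
  have hev : ∀ᶠ ε in 𝓝[>] 0, δ q₀ * ((E - ε) / (K - q₀ - ε)) ∈ S :=
    mem_of_superset (Ioo_mem_nhdsGT hE) fun ε hε => ⟨q₀, hq₀, ε, hε, rfl⟩
  have hcl := mem_closure_of_tendsto hlim hev
  exact (isLUB_of_mem_closure hub hcl).csSup_eq (closure_nonempty_iff.1 ⟨_, hcl⟩)

theorem stmt_19 (p κ χ p_X : ℝ)
    (hp : 0 < p) (hκ : 1 < κ) (hχ : 0 < χ)
    (hpX₁ : p ≤ p_X) (hpX₂ : p_X < p + κ - 1)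
    (δbar : ℝ → ℝ) (hδbar : ∀ q, δbar q = min (min ((p - q) / χ) (q / 2)) 1)
    (γ : ℝ → ℝ → ℝ)
    (hγ : ∀ q ε, γ q ε = (p + κ - 1 - p_X - ε) / (p + κ - 1 - q - ε))
    (qstar : ℝ) (hqstar : qstar = if p ≤ χ + 2 then 2 * p / (2 + χ) else p - χ) :
    sSup {v : ℝ | ∃ q ∈ Set.Ioo 0 p, ∃ ε ∈ Set.Ioo 0 (p + κ - 1 - p_X),
        v = δbar q * γ q ε} =
      (if p ≤ χ + 2 then
        p / (2 + χ) * ((p + κ - 1 - p_X) / (p + κ - 1 - 2 * p / (2 + χ)))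
      else (p + κ - 1 - p_X) / (κ + χ - 1)) ∧
    sSup {v : ℝ | ∃ q ∈ Set.Ioo 0 p, ∃ ε ∈ Set.Ioo 0 (p + κ - 1 - p_X),
        v = δbar q * γ q ε} =
      δbar qstar * ((p + κ - 1 - p_X) / (p + κ - 1 - qstar)) := by
  change qstar = crossingPoint p χ at hqstar
  have hq₀ := hqstar ▸ crossingPoint_mem_Ioo hp hχ
  have hcross : (p - qstar) / χ = min (qstar / 2) 1 := by
    rw [hqstar, sub_crossingPoint_div hχ, min_crossingPoint_half_one hχ]
  have hδq₀ : δbar qstar = (p - qstar) / χ := by rw [hδbar, min_assoc, ← hcross, min_self]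
  have hsup : sSup {v : ℝ | ∃ q ∈ Set.Ioo 0 p, ∃ ε ∈ Set.Ioo 0 (p + κ - 1 - p_X),
      v = δbar q * γ q ε} = δbar qstar * ((p + κ - 1 - p_X) / (p + κ - 1 - qstar)) := by
    simp only [hγ]
    refine sSup_mul_sub_div_sub_eq (fun q hq => ?_) hq₀ (fun q hq => ?_) (by linarith)
      (by linarith)
    · rw [hδbar]
      exact le_min (le_min (div_nonneg (by linarith [hq.2]) hχ.le) (by linarith [hq.1])) zero_le_one
    · rw [hδbar, hδq₀]
      exact min_div_sub_le_of_crossing hχ (by linarith) (by linarith [hq.2]) hq₀.2.le hcross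
  refine ⟨?_, hsup⟩
  rw [hsup, hδq₀, hqstar, sub_crossingPoint_div hχ, crossingPoint]
  split_ifs
  · rfl
  · rw [one_mul]
    congr 1
    ring
end
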